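/- arXiv:1908.09794 — 6 statements merged into one kernel-verified Lean document; each statement's English description precedes it below -/
import Mathlib

section
/- Let β > 0, let ν be a measure on a measurable space X, and let g, f : X → [0,∞) be measurable functions such that f^(1+β), f^β·g and g^(1+β) are all ν-integrable. Then the density power divergence d_β(g,f) = ∫ ( f^(1+β) − (1+1/β)·f^β·g + (1/β)·g^(1+β) ) dν satisfies d_β(g,f) ≥ 0, and d_β(g,f) = 0 if and only if f = g ν-almost everywhere. -/
/-!
Up to the factor `1 / β`, the integrand of `d_β(g, f)` at a point is the Bregman divergence
`b ^ p - a ^ p - p a ^ (p - 1) (b - a)` of the strictly convex function `t ↦ t ^ p`,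
`p = 1 + β`, evaluated at `a = f x`, `b = g x`: the gap between the function and its tangent
line at `a`. It is therefore nonnegative and vanishes exactly where `f x = g x`, and the
integral of a nonnegative integrable function vanishes iff the function vanishes a.e.
-/

open MeasureTheory Set

theorem StrictConvexOn.add_mul_sub_lt_of_hasDerivAt {S : Set ℝ} {f : ℝ → ℝ} {x y f' : ℝ}
    (hf : StrictConvexOn ℝ S f) (hx : x ∈ S) (hy : y ∈ S) (hxy : x ≠ y)
    (hf' : HasDerivAt f f' x) : f x + f' * (y - x) < f y := by
  rcases hxy.lt_or_gt with hlt | hgt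
  · have := hf.lt_slope_of_hasDerivAt hx hy hlt hf'
    rw [slope_def_field, lt_div_iff₀ (sub_pos.2 hlt)] at this
    linarith
  · have := hf.slope_lt_of_hasDerivAt hy hx hgt hf'
    rw [slope_def_field, div_lt_iff₀ (sub_pos.2 hgt)] at this
    linarith

noncomputable def dpdIntegrand (β a b : ℝ) : ℝ :=
  a ^ (1 + β) - (1 + 1 / β) * a ^ β * b + (1 / β) * b ^ (1 + β)

section dpdIntegrand

variable {β a b : ℝ}

theorem dpdIntegrand_mul_eq_bregman (hβ : 0 < β) (ha : 0 ≤ a) :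
    β * dpdIntegrand β a b = b ^ (1 + β) - (a ^ (1 + β) + (1 + β) * a ^ β * (b - a)) := by
  rw [dpdIntegrand, Real.rpow_one_add' ha (by positivity)]
  field_simp
  ring

theorem dpdIntegrand_pos (hβ : 0 < β) (ha : 0 ≤ a) (hb : 0 ≤ b) (hab : a ≠ b) :
    0 < dpdIntegrand β a b := by
  have hderiv : HasDerivAt (fun t : ℝ ↦ t ^ (1 + β)) ((1 + β) * a ^ β) a := by
    simpa using Real.hasDerivAt_rpow_const (x := a) (p := 1 + β) (Or.inr (by linarith))
  have htangent := (strictConvexOn_rpow (by linarith : 1 < 1 + β)).add_mul_sub_lt_of_hasDerivAt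
    (mem_Ici.2 ha) (mem_Ici.2 hb) hab hderiv
  have hbregman := dpdIntegrand_mul_eq_bregman (b := b) hβ ha
  exact pos_of_mul_pos_right (by linarith) hβ.le

theorem dpdIntegrand_self (hβ : 0 < β) (ha : 0 ≤ a) : dpdIntegrand β a a = 0 := by
  have := dpdIntegrand_mul_eq_bregman (b := a) hβ ha
  rw [sub_self, mul_zero, add_zero, sub_self] at this
  exact (mul_eq_zero.1 this).resolve_left hβ.ne'

theorem dpdIntegrand_nonneg (hβ : 0 < β) (ha : 0 ≤ a) (hb : 0 ≤ b) :
    0 ≤ dpdIntegrand β a b := by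
  rcases eq_or_ne a b with rfl | hab
  · exact (dpdIntegrand_self hβ ha).ge
  · exact (dpdIntegrand_pos hβ ha hb hab).le

theorem dpdIntegrand_eq_zero_iff (hβ : 0 < β) (ha : 0 ≤ a) (hb : 0 ≤ b) :
    dpdIntegrand β a b = 0 ↔ a = b := by
  refine ⟨fun h ↦ ?_, fun h ↦ h ▸ dpdIntegrand_self hβ ha⟩
  by_contra hab
  exact (dpdIntegrand_pos hβ ha hb hab).ne' h

end dpdIntegrand

theorem dpd_nonneg_and_eq_zero_iff_general {X : Type*} [MeasurableSpace X] (ν : Measure X)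
    (β : ℝ) (hβ : 0 < β) (g f : X → ℝ)
    (hgnn : ∀ x, 0 ≤ g x) (hfnn : ∀ x, 0 ≤ f x)
    (hint1 : Integrable (fun x => f x ^ (1 + β)) ν)
    (hint2 : Integrable (fun x => f x ^ β * g x) ν)
    (hint3 : Integrable (fun x => g x ^ (1 + β)) ν) :
    0 ≤ ∫ x, (f x ^ (1 + β) - (1 + 1 / β) * f x ^ β * g x + (1 / β) * g x ^ (1 + β)) ∂ν ∧
    ((∫ x, (f x ^ (1 + β) - (1 + 1 / β) * f x ^ β * g x + (1 / β) * g x ^ (1 + β)) ∂ν) = 0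
      ↔ f =ᵐ[ν] g) := by
  change 0 ≤ ∫ x, dpdIntegrand β (f x) (g x) ∂ν ∧
    (∫ x, dpdIntegrand β (f x) (g x) ∂ν = 0 ↔ f =ᵐ[ν] g)
  have hint : Integrable (fun x ↦ dpdIntegrand β (f x) (g x)) ν := by
    have hcross := hint2.const_mul (1 + 1 / β)
    simp only [← mul_assoc] at hcross
    exact (hint1.sub hcross).add (hint3.const_mul _)
  have hnn : 0 ≤ fun x ↦ dpdIntegrand β (f x) (g x) :=
    fun x ↦ dpdIntegrand_nonneg hβ (hfnn x) (hgnn x)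
  refine ⟨integral_nonneg hnn, ?_⟩
  rw [integral_eq_zero_iff_of_nonneg hnn hint]
  exact Filter.eventually_congr
    (.of_forall fun x ↦ dpdIntegrand_eq_zero_iff hβ (hfnn x) (hgnn x))

/-- The density power divergence `d_β(g,f)` between nonnegative measurable densities
is nonnegative, and vanishes iff `f = g` ν-almost everywhere. -/
theorem dpd_nonneg_and_eq_zero_iff {X : Type*} [MeasurableSpace X] (ν : Measure X)
    (β : ℝ) (hβ : 0 < β) (g f : X → ℝ)
    (hg : Measurable g) (hf : Measurable f)
    (hgnn : ∀ x, 0 ≤ g x) (hfnn : ∀ x, 0 ≤ f x)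
    (hint1 : Integrable (fun x => f x ^ (1 + β)) ν)
    (hint2 : Integrable (fun x => f x ^ β * g x) ν)
    (hint3 : Integrable (fun x => g x ^ (1 + β)) ν) :
    0 ≤ ∫ x, (f x ^ (1 + β) - (1 + 1 / β) * f x ^ β * g x + (1 / β) * g x ^ (1 + β)) ∂ν ∧
    ((∫ x, (f x ^ (1 + β) - (1 + 1 / β) * f x ^ β * g x + (1 / β) * g x ^ (1 + β)) ∂ν) = 0
      ↔ f =ᵐ[ν] g) :=
  dpd_nonneg_and_eq_zero_iff_general ν β hβ g f hgnn hfnn hint1 hint2 hint3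
end

section
/- Let ν be a measure on a measurable space X, and let g, f : X → (0,∞) be measurable probability densities (∫ g dν = ∫ f dν = 1, with f and g ν-integrable). Suppose g·log(g/f) and f − g are ν-integrable, and suppose there exist β₀ > 0 and a ν-integrable function H such that | f^(1+β) − (1+1/β)·f^β·g + (1/β)·g^(1+β) | ≤ H holds ν-almost everywhere for every β ∈ (0, β₀]. Then d_β(g,f) = ∫ ( f^(1+β) − (1+1/β)·f^β·g + (1/β)·g^(1+β) ) dν tends to the Kullback–Leibler divergence ∫ g·log(g/f) dν as β → 0⁺. -/
open Filter Set MeasureTheory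

/-- Under a domination condition, the density power divergence `d_β(g,f)` between
probability densities tends to the Kullback–Leibler divergence `∫ g·log(g/f) dν`
as `β → 0⁺`. -/
theorem dpd_tendsto_KL {X : Type*} [MeasurableSpace X] (ν : Measure X)
    (g f : X → ℝ) (hg : Measurable g) (hf : Measurable f)
    (hgpos : ∀ x, 0 < g x) (hfpos : ∀ x, 0 < f x)
    (hgint : Integrable g ν) (hfint : Integrable f ν)
    (hg1 : ∫ x, g x ∂ν = 1) (hf1 : ∫ x, f x ∂ν = 1)
    (hKLint : Integrable (fun x => g x * Real.log (g x / f x)) ν)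
    (hfg : Integrable (fun x => f x - g x) ν)
    (β₀ : ℝ) (hβ₀ : 0 < β₀) (H : X → ℝ) (hH : Integrable H ν)
    (hdom : ∀ β ∈ Ioc (0 : ℝ) β₀, ∀ᵐ x ∂ν,
      |f x ^ (1 + β) - (1 + 1 / β) * f x ^ β * g x + (1 / β) * g x ^ (1 + β)| ≤ H x) :
    Tendsto
      (fun β : ℝ =>
        ∫ x, (f x ^ (1 + β) - (1 + 1 / β) * f x ^ β * g x + (1 / β) * g x ^ (1 + β)) ∂ν)
      (nhdsWithin 0 (Ioi 0)) (nhds (∫ x, g x * Real.log (g x / f x) ∂ν)) := by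
  have hν0 : ∫ x, (f x - g x) ∂ν = 0 := by
    rw [integral_sub hfint hgint, hf1, hg1]; ring
  have hrw : ∫ x, g x * Real.log (g x / f x) ∂ν
      = ∫ x, ((f x - g x) + g x * Real.log (g x / f x)) ∂ν := by
    rw [integral_add hfg hKLint, hν0, zero_add]
  rw [hrw]
  apply tendsto_integral_filter_of_dominated_convergence H
  · have hmf : ∀ c : ℝ, Measurable fun x => f x ^ c := by
      intro c
      have he : (fun x => f x ^ c) = fun x => Real.exp (Real.log (f x) * c) :=
        funext fun x => Real.rpow_def_of_pos (hfpos x) c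
      rw [he]
      exact Real.measurable_exp.comp ((Real.measurable_log.comp hf).mul_const c)
    have hmg : ∀ c : ℝ, Measurable fun x => g x ^ c := by
      intro c
      have he : (fun x => g x ^ c) = fun x => Real.exp (Real.log (g x) * c) :=
        funext fun x => Real.rpow_def_of_pos (hgpos x) c
      rw [he]
      exact Real.measurable_exp.comp ((Real.measurable_log.comp hg).mul_const c)
    filter_upwards [self_mem_nhdsWithin] with β hβ
    apply Measurable.aestronglyMeasurable
    exact ((hmf _).sub ((measurable_const.mul (hmf _)).mul hg)).add
      (measurable_const.mul (hmg _))
  · have hmem : Ioc (0:ℝ) β₀ ∈ nhdsWithin (0:ℝ) (Ioi 0) :=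
      Ioc_mem_nhdsGT_of_mem ⟨le_refl 0, hβ₀⟩
    filter_upwards [hmem] with β hβ
    simpa [Real.norm_eq_abs] using hdom β hβ
  · exact hH
  · refine Filter.Eventually.of_forall fun x => ?_
    have ha := hfpos x
    have hb := hgpos x
    set a := f x with ha_def
    set b := g x with hb_def
    -- slope limit for the difference of exponentials
    have hd : HasDerivAt (fun β : ℝ => Real.exp (β * Real.log b) - Real.exp (β * Real.log a))
        (Real.log b - Real.log a) 0 := by
      have h1 : HasDerivAt (fun β : ℝ => Real.exp (β * Real.log b)) (Real.log b) 0 := by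
        simpa using (hasDerivAt_mul_const (x := (0:ℝ)) (Real.log b)).exp
      have h2 : HasDerivAt (fun β : ℝ => Real.exp (β * Real.log a)) (Real.log a) 0 := by
        simpa using (hasDerivAt_mul_const (x := (0:ℝ)) (Real.log a)).exp
      exact h1.sub h2
    have hslope : Tendsto
        (fun β : ℝ => (Real.exp (β * Real.log b) - Real.exp (β * Real.log a)) / β)
        (nhdsWithin 0 (Ioi 0)) (nhds (Real.log b - Real.log a)) := by
      have h := hasDerivAt_iff_tendsto_slope.mp hd
      have h2 := h.mono_left (nhdsWithin_mono 0 (fun y hy => ne_of_gt hy))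
      refine h2.congr fun β => ?_
      simp [slope_def_field]
    have hexp_a : Tendsto (fun β : ℝ => Real.exp (β * Real.log a))
        (nhdsWithin 0 (Ioi 0)) (nhds 1) := by
      have hc : Continuous fun β : ℝ => Real.exp (β * Real.log a) := by fun_prop
      have : Tendsto (fun β : ℝ => Real.exp (β * Real.log a)) (nhds 0) (nhds 1) := by
        simpa using hc.tendsto 0
      exact this.mono_left nhdsWithin_le_nhds
    have hexp_b : Tendsto (fun β : ℝ => Real.exp (β * Real.log b))
        (nhdsWithin 0 (Ioi 0)) (nhds 1) := by
      have hc : Continuous fun β : ℝ => Real.exp (β * Real.log b) := by fun_prop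
      have : Tendsto (fun β : ℝ => Real.exp (β * Real.log b)) (nhds 0) (nhds 1) := by
        simpa using hc.tendsto 0
      exact this.mono_left nhdsWithin_le_nhds
    have hmain : Tendsto
        (fun β : ℝ => a * Real.exp (β * Real.log a) - Real.exp (β * Real.log a) * b
          + b * ((Real.exp (β * Real.log b) - Real.exp (β * Real.log a)) / β))
        (nhdsWithin 0 (Ioi 0))
        (nhds (a - b + b * (Real.log b - Real.log a))) := by
      have := ((hexp_a.const_mul a).sub (hexp_a.mul_const b)).add (hslope.const_mul b)
      simpa using this
    have hgoal : Tendsto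
        (fun β : ℝ => a ^ (1 + β) - (1 + 1 / β) * a ^ β * b + (1 / β) * b ^ (1 + β))
        (nhdsWithin 0 (Ioi 0))
        (nhds (a - b + b * (Real.log b - Real.log a))) := by
      refine hmain.congr' ?_
      filter_upwards [self_mem_nhdsWithin] with β (hβ : β ∈ Ioi (0:ℝ))
      have hβ0 : β ≠ 0 := ne_of_gt hβ
      rw [Real.rpow_add ha, Real.rpow_one, Real.rpow_add hb, Real.rpow_one,
        Real.rpow_def_of_pos ha, Real.rpow_def_of_pos hb, mul_comm (Real.log a) β,
        mul_comm (Real.log b) β]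
      field_simp
      ring
    have hlogdiv : Real.log (b / a) = Real.log b - Real.log a :=
      Real.log_div (ne_of_gt hb) (ne_of_gt ha)
    simpa [hlogdiv] using hgoal
end

section
/- Let F be a probability measure on a measurable space 𝒳, let u : 𝒳 → ℝ^p be measurable and F-integrable with ∫ u dF = 0, let K be an invertible p×p real matrix, and fix y ∈ 𝒳. For ε ∈ [0,1] define G_ε = (1−ε)·F + ε·δ_y (δ_y the Dirac measure at y), U(ε) = ∫ u dG_ε, and φ(ε) = U(ε)ᵀ·K⁻¹·U(ε). Then φ(ε) = ε²·u(y)ᵀ·K⁻¹·u(y) for every ε ∈ [0,1]; in particular the first derivative of φ at 0 equals 0 and the second derivative of φ at 0 equals 2·u(y)ᵀ·K⁻¹·u(y). -/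
open MeasureTheory Matrix Set

/-- Influence function of the Rao-type test functional at the simple null:
along the contamination path `G_ε = (1−ε)F + ε·δ_y`, the functional
`φ(ε) = U(ε)ᵀK⁻¹U(ε)` equals `ε²·u(y)ᵀK⁻¹u(y)` on `[0,1]`; in particular its
first derivative at `0` vanishes and its second derivative at `0` equals
`2·u(y)ᵀK⁻¹u(y)`. -/
theorem rao_test_functional_influence {X : Type*} [MeasurableSpace X]
    (F : Measure X) [IsProbabilityMeasure F] (p : ℕ)
    (u : X → Fin p → ℝ) (humeas : Measurable u)
    (huint : ∀ i, Integrable (fun x => u x i) F)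
    (humean : ∀ i, ∫ x, u x i ∂F = 0)
    (K : Matrix (Fin p) (Fin p) ℝ) (hK : IsUnit K) (y : X)
    (G : ℝ → Measure X)
    (hG : ∀ ε, G ε = ENNReal.ofReal (1 - ε) • F + ENNReal.ofReal ε • Measure.dirac y)
    (U : ℝ → Fin p → ℝ) (hU : U = fun ε i => ∫ x, u x i ∂(G ε))
    (φ : ℝ → ℝ) (hφ : φ = fun ε => U ε ⬝ᵥ (K⁻¹ *ᵥ U ε)) :
    (∀ ε ∈ Icc (0 : ℝ) 1, φ ε = ε ^ 2 * (u y ⬝ᵥ (K⁻¹ *ᵥ u y))) ∧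
    derivWithin φ (Ici 0) 0 = 0 ∧
    derivWithin (fun ε => derivWithin φ (Ici 0) ε) (Ici 0) 0
      = 2 * (u y ⬝ᵥ (K⁻¹ *ᵥ u y)) := by
  set c : ℝ := u y ⬝ᵥ (K⁻¹ *ᵥ u y) with hc
  have hmi : ∀ i, Measurable (fun x => u x i) := fun i =>
    (measurable_pi_apply i).comp humeas
  have hUeq : ∀ ε ≥ (0:ℝ), U ε = fun i => ε * u y i := by
    intro ε hε
    funext i
    rw [hU]
    simp only
    rw [hG]
    rw [MeasureTheory.integral_add_measure]
    · rw [integral_smul_measure, integral_smul_measure, integral_dirac' _ _ (hmi i).stronglyMeasurable,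
        humean i, ENNReal.toReal_ofReal hε]
      simp
    · exact ((huint i).smul_measure ENNReal.ofReal_ne_top)
    · exact (((integrable_const (u y i)).congr (MeasureTheory.ae_eq_dirac' (hmi i)).symm)).smul_measure ENNReal.ofReal_ne_top
  have hφeq : ∀ ε ≥ (0:ℝ), φ ε = ε ^ 2 * c := by
    intro ε hε
    rw [hφ]
    simp only [hUeq ε hε]
    have : (fun i => ε * u y i) = ε • u y := rfl
    rw [this, Matrix.mulVec_smul, smul_dotProduct, dotProduct_smul]
    simp only [hc, smul_eq_mul, smul_dotProduct]
    ring
  have heq : Set.EqOn φ (fun ε => ε ^ 2 * c) (Ici 0) := fun ε hε => hφeq ε hε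
  have hderiv : ∀ ε ∈ Ici (0:ℝ), derivWithin φ (Ici 0) ε = 2 * ε * c := by
    intro ε hε
    rw [derivWithin_congr heq (heq hε)]
    rw [DifferentiableAt.derivWithin (by fun_prop) (uniqueDiffOn_Ici 0 ε hε)]
    have : deriv (fun ε : ℝ => ε ^ 2 * c) ε = 2 * ε * c := by
      rw [deriv_mul_const (by fun_prop)]
      simp [mul_comm]
    rw [this]
  refine ⟨fun ε hε => hφeq ε hε.1, ?_, ?_⟩
  · rw [hderiv 0 (mem_Ici.mpr le_rfl)]; ring
  · have heq2 : Set.EqOn (fun ε => derivWithin φ (Ici 0) ε) (fun ε => 2 * ε * c) (Ici 0) :=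
      fun ε hε => hderiv ε hε
    rw [derivWithin_congr heq2 (heq2 (mem_Ici.mpr le_rfl))]
    rw [DifferentiableAt.derivWithin (by fun_prop) (uniqueDiffOn_Ici 0 0 (mem_Ici.mpr le_rfl))]
    have : deriv (fun ε : ℝ => 2 * ε * c) 0 = 2 * c := by
      simp [mul_comm, mul_assoc]
    rw [this]
end

section
/- For every β ≥ 0, μ ∈ ℝ and σ > 0, one has ∫_ℝ ((x − μ)/σ²)²·φ_{μ,σ}(x)^(2β+1) dx = 1/((2π)^β·σ^(2β+2)·(2β+1)^(3/2)), where φ_{μ,σ}(x) = (√(2π)·σ)⁻¹·exp(−(x−μ)²/(2σ²)). -/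
open Real MeasureTheory

lemma integral_sq_mul_gauss {b : ℝ} (hb : 0 < b) :
    ∫ x : ℝ, x ^ 2 * Real.exp (-b * x ^ 2) = Real.sqrt π / 2 * b ^ (-(3 : ℝ) / 2) := by
  have h := integral_rpow_mul_exp_neg_mul_rpow (p := 2) (q := 2) two_pos (by norm_num) hb
  have h2 : ∀ x : ℝ, x ^ (2 : ℝ) = x ^ (2 : ℕ) := by
    intro x
    rw [show ((2 : ℝ)) = ((2 : ℕ) : ℝ) by norm_num, Real.rpow_natCast]
  simp_rw [h2] at h
  have habs : (∫ x : ℝ, x ^ 2 * Real.exp (-b * x ^ 2))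
      = ∫ x : ℝ, (fun y : ℝ => y ^ 2 * Real.exp (-b * y ^ 2)) |x| := by
    congr 1
    ext x
    simp [sq_abs]
  rw [habs, integral_comp_abs (f := fun y : ℝ => y ^ 2 * Real.exp (-b * y ^ 2)), h]
  have hG : Real.Gamma ((2 + 1) / 2) = Real.sqrt π / 2 := by
    rw [show ((2 + 1) / 2 : ℝ) = 1 / 2 + 1 by norm_num,
      Real.Gamma_add_one (by norm_num), Real.Gamma_one_half_eq]
    ring
  rw [hG]
  ring_nf

/-- In the normal location model with known scale,
`K_β(μ) = ∫ ((x−μ)/σ²)²·φ_{μ,σ}(x)^(2β+1) dx = ((2π)^β·σ^(2β+2)·(2β+1)^(3/2))⁻¹`. -/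
theorem normal_K_beta_location (β μ σ : ℝ) (hβ : 0 ≤ β) (hσ : 0 < σ) :
    ∫ x : ℝ, ((x - μ) / σ ^ 2) ^ 2 *
        ((Real.sqrt (2 * π) * σ)⁻¹ * Real.exp (-(x - μ) ^ 2 / (2 * σ ^ 2))) ^ (2 * β + 1)
      = 1 / ((2 * π) ^ β * σ ^ (2 * β + 2) * (2 * β + 1) ^ ((3 : ℝ) / 2)) := by
  have hπ : 0 < π := pi_pos
  have h2π : (0 : ℝ) < 2 * π := by positivity
  have ha : (0 : ℝ) < 2 * β + 1 := by linarith
  set b : ℝ := (2 * β + 1) / (2 * σ ^ 2) with hb_def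
  have hb : 0 < b := by positivity
  have hc : (0 : ℝ) < (Real.sqrt (2 * π) * σ)⁻¹ := by positivity
  set C : ℝ := (Real.sqrt (2 * π) * σ)⁻¹ ^ (2 * β + 1) / σ ^ 4 with hC_def
  have hrw : ∀ x : ℝ, ((x - μ) / σ ^ 2) ^ 2 *
        ((Real.sqrt (2 * π) * σ)⁻¹ * Real.exp (-(x - μ) ^ 2 / (2 * σ ^ 2))) ^ (2 * β + 1)
      = C * ((x - μ) ^ 2 * Real.exp (-b * (x - μ) ^ 2)) := by
    intro x
    have harg : (-(x - μ) ^ 2 / (2 * σ ^ 2)) * (2 * β + 1) = -b * (x - μ) ^ 2 := by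
      rw [hb_def]; field_simp
    rw [Real.mul_rpow hc.le (Real.exp_nonneg _), ← Real.exp_mul, harg, hC_def]
    field_simp
  simp_rw [hrw]
  rw [MeasureTheory.integral_const_mul]
  rw [show (∫ x : ℝ, (x - μ) ^ 2 * Real.exp (-b * (x - μ) ^ 2))
      = ∫ x : ℝ, (fun y : ℝ => y ^ 2 * Real.exp (-b * y ^ 2)) (x - μ) from rfl,
    MeasureTheory.integral_sub_right_eq_self (fun y : ℝ => y ^ 2 * Real.exp (-b * y ^ 2)) μ,
    integral_sq_mul_gauss hb]
  -- now a pure scalar identity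
  have hL : (0 : ℝ) < C * (Real.sqrt π / 2 * b ^ (-(3 : ℝ) / 2)) := by
    rw [hC_def]; positivity
  have hR : (0 : ℝ) < 1 / ((2 * π) ^ β * σ ^ (2 * β + 2) * (2 * β + 1) ^ ((3 : ℝ) / 2)) := by
    positivity
  rw [← Real.exp_log hL, ← Real.exp_log hR]
  congr 1
  rw [hC_def, hb_def]
  rw [Real.log_mul (by positivity) (by positivity),
    Real.log_div (by positivity) (by positivity),
    Real.log_mul (by positivity) (by positivity),
    Real.log_rpow (by positivity), Real.log_rpow (by positivity),
    Real.log_inv, Real.log_mul (by positivity) (by positivity),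
    Real.log_sqrt h2π.le, Real.log_div (one_ne_zero) (by positivity),
    Real.log_one, Real.log_pow]
  have l2π : Real.log (2 * π) = Real.log 2 + Real.log π :=
    Real.log_mul two_ne_zero hπ.ne'
  have lσ2 : Real.log ((2 * β + 1) / (2 * σ ^ 2))
      = Real.log (2 * β + 1) - (Real.log 2 + 2 * Real.log σ) := by
    rw [Real.log_div ha.ne' (by positivity), Real.log_mul two_ne_zero (by positivity),
      Real.log_pow]
    push_cast; ring
  have lsq : Real.log (Real.sqrt π / 2) = Real.log π / 2 - Real.log 2 := by
    rw [Real.log_div (by positivity) two_ne_zero, Real.log_sqrt hπ.le]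
  have lR : Real.log ((2 * π) ^ β * σ ^ (2 * β + 2) * (2 * β + 1) ^ ((3 : ℝ) / 2))
      = β * (Real.log 2 + Real.log π) + (2 * β + 2) * Real.log σ
        + 3 / 2 * Real.log (2 * β + 1) := by
    rw [Real.log_mul (by positivity) (by positivity),
      Real.log_mul (by positivity) (by positivity),
      Real.log_rpow h2π, Real.log_rpow hσ, Real.log_rpow ha, l2π]
  rw [lσ2, lsq, lR, l2π]
  push_cast
  ring
end

section
/- For every β ≥ 0, μ ∈ ℝ and σ > 0, one has ∫_ℝ (1/σ)·((x − μ)²/σ² − 1)·φ_{μ,σ}(x)^(β+1) dx = −β/((2π)^(β/2)·σ^(β+1)·(β+1)^(3/2)), where φ_{μ,σ}(x) = (√(2π)·σ)⁻¹·exp(−(x−μ)²/(2σ²)). -/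
/-!
The power `φ_{μ,σ}^(β+1)` is a constant multiple of the density of `N(μ, σ²/(β+1))`, so the
integral is that constant times `E[(X - μ)²/σ² - 1] = 1/(β+1) - 1` for `X ~ N(μ, σ²/(β+1))`.
-/

open Real MeasureTheory ProbabilityTheory
open scoped NNReal

lemma integral_mul_sq_sub_add_mul_gaussianPDFReal (μ : ℝ) {v : ℝ≥0} (hv : v ≠ 0) (a b : ℝ) :
    ∫ x, (a * (x - μ) ^ 2 + b) * gaussianPDFReal μ v x = a * v + b := by
  have hsq : Integrable (fun x ↦ (x - μ) ^ 2) (gaussianReal μ v) :=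
    ((memLp_id_gaussianReal 2).sub (memLp_const μ)).integrable_sq
  have hvar : ∫ x, (x - μ) ^ 2 ∂gaussianReal μ v = v := by
    simpa [variance_eq_integral measurable_id.aemeasurable] using
      (variance_id_gaussianReal (μ := μ) (v := v))
  calc ∫ x, (a * (x - μ) ^ 2 + b) * gaussianPDFReal μ v x
      = ∫ x, a * (x - μ) ^ 2 + b ∂gaussianReal μ v := by
        rw [integral_gaussianReal_eq_integral_smul hv]
        simp_rw [smul_eq_mul, mul_comm]
    _ = a * v + b := by
        rw [integral_add (hsq.const_mul a) (integrable_const b), integral_const_mul, hvar]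
        simp

lemma gaussian_rpow_eq_mul_gaussianPDFReal (μ : ℝ) {σ p : ℝ} (hσ : 0 < σ) (hp : 0 < p) (x : ℝ) :
    ((√(2 * π) * σ)⁻¹ * exp (-(x - μ) ^ 2 / (2 * σ ^ 2))) ^ p
      = (√(2 * π) * σ) ^ (1 - p) / √p * gaussianPDFReal μ (σ ^ 2 / p).toNNReal x := by
  have hS : 0 < √(2 * π) * σ := by positivity
  rw [gaussianPDFReal, Real.coe_toNNReal _ (by positivity), mul_rpow (by positivity) (by positivity),
    ← exp_mul, inv_rpow hS.le, rpow_sub hS, rpow_one,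
    show 2 * π * (σ ^ 2 / p) = (√(2 * π) * σ) ^ 2 / √p ^ 2 by
      rw [mul_pow, sq_sqrt (by positivity), sq_sqrt hp.le, mul_div_assoc],
    ← div_pow, sqrt_sq (by positivity)]
  field_simp

/-- In the normal model, the second component of `ξ_β`:
`∫ (1/σ)·((x−μ)²/σ² − 1)·φ_{μ,σ}(x)^(β+1) dx = −β/((2π)^(β/2)·σ^(β+1)·(β+1)^(3/2))`. -/
theorem normal_xi_beta_scale (β μ σ : ℝ) (hβ : 0 ≤ β) (hσ : 0 < σ) :
    ∫ x : ℝ, (1 / σ) * ((x - μ) ^ 2 / σ ^ 2 - 1) *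
        ((Real.sqrt (2 * π) * σ)⁻¹ * Real.exp (-(x - μ) ^ 2 / (2 * σ ^ 2))) ^ (β + 1)
      = -β / ((2 * π) ^ (β / 2) * σ ^ (β + 1) * (β + 1) ^ ((3 : ℝ) / 2)) := by
  have hβ1 : 0 < β + 1 := by linarith
  set K := (√(2 * π) * σ) ^ (1 - (β + 1)) / √(β + 1) with hK
  set v := (σ ^ 2 / (β + 1)).toNNReal
  have hv : (v : ℝ) = σ ^ 2 / (β + 1) := Real.coe_toNNReal _ (by positivity)
  have hv0 : v ≠ 0 := by
    rw [← NNReal.coe_ne_zero, hv]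
    positivity
  calc _ = ∫ x, K / σ * ((1 / σ ^ 2 * (x - μ) ^ 2 + -1) * gaussianPDFReal μ v x) := by
        congr 1 with x
        rw [gaussian_rpow_eq_mul_gaussianPDFReal μ hσ hβ1]
        ring
    _ = K / σ * (1 / σ ^ 2 * (σ ^ 2 / (β + 1)) + -1) := by
        rw [integral_const_mul, integral_mul_sq_sub_add_mul_gaussianPDFReal μ hv0, hv]
    _ = _ := by
        have h2π : 0 < 2 * π := by positivity
        rw [hK, show 1 - (β + 1) = -β by ring, rpow_neg (by positivity),
          mul_rpow (sqrt_nonneg _) hσ.le, sqrt_eq_rpow, ← rpow_mul h2π.le,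
          rpow_add hσ, rpow_one, show (3 : ℝ) / 2 = 1 + 1 / 2 by norm_num, rpow_add hβ1, rpow_one,
          ← sqrt_eq_rpow, show 1 / 2 * β = β / 2 by ring]
        field_simp
        ring
end

section
/- For every β ≥ 0, μ ∈ ℝ and σ > 0, set ξ₂ = −β/((2π)^(β/2)·σ^(β+1)·(β+1)^(3/2)). Then ∫_ℝ ( (1/σ)·((x−μ)²/σ² − 1) )²·φ_{μ,σ}(x)^(2β+1) dx − ξ₂² = τ(β)/(σ^(2(β+1))·(2π)^β), where τ(β) = 2·(2β²+1)·√(2β+1)/(2β+1)³ − β²/(β+1)³ and φ_{μ,σ}(x) = (√(2π)·σ)⁻¹·exp(−(x−μ)²/(2σ²)). -/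
/-!
After translating by `μ`, the power `φ_{μ,σ}^c` is a constant multiple of the Gaussian
`exp (-(c / (2σ²)) x²)`, and the squared score is a polynomial in `x²`, so the integral only
involves the Gaussian moments of order `0`, `2` and `4`. These follow from
`∫ x^(n+2) e^(-b x²) = (n+1)/(2b) ∫ x^n e^(-b x²)`. With `c = 2β + 1` the rest is algebra with
real powers.
-/

open Real MeasureTheory

section GaussianMoments

variable {b : ℝ}

lemma integrable_pow_mul_exp_neg_mul_sq (hb : 0 < b) (n : ℕ) :
    Integrable fun x : ℝ => x ^ n * exp (-b * x ^ 2) := by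
  simpa [rpow_natCast] using
    integrable_rpow_mul_exp_neg_mul_sq hb (by linarith [n.cast_nonneg (α := ℝ)] : (-1 : ℝ) < n)

lemma hasDerivAt_pow_succ_mul_exp_neg_mul_sq (b : ℝ) (n : ℕ) (x : ℝ) :
    HasDerivAt (fun x : ℝ => x ^ (n + 1) * exp (-b * x ^ 2))
      ((n + 1) * (x ^ n * exp (-b * x ^ 2)) - 2 * b * (x ^ (n + 2) * exp (-b * x ^ 2))) x := by
  have hpow : HasDerivAt (fun x : ℝ => x ^ (n + 1)) ((n + 1) * x ^ n) x := by
    simpa using hasDerivAt_pow (n + 1) x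
  have hexp : HasDerivAt (fun x : ℝ => exp (-b * x ^ 2)) (exp (-b * x ^ 2) * (-b * (2 * x))) x := by
    simpa using ((hasDerivAt_pow 2 x).const_mul (-b)).exp
  exact (hpow.mul hexp).congr_deriv (by ring)

/-- Integration by parts against `x ↦ x ^ (n + 1) * exp (-b * x ^ 2)`, which vanishes at ±∞. -/
lemma integral_pow_add_two_mul_exp_neg_mul_sq (hb : 0 < b) (n : ℕ) :
    ∫ x : ℝ, x ^ (n + 2) * exp (-b * x ^ 2)
      = (n + 1) / (2 * b) * ∫ x : ℝ, x ^ n * exp (-b * x ^ 2) := by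
  have hn := integrable_pow_mul_exp_neg_mul_sq hb n
  have hn2 := integrable_pow_mul_exp_neg_mul_sq hb (n + 2)
  have hzero := integral_eq_zero_of_hasDerivAt_of_integrable
    (hasDerivAt_pow_succ_mul_exp_neg_mul_sq b n)
    ((hn.const_mul _).sub (hn2.const_mul _)) (integrable_pow_mul_exp_neg_mul_sq hb (n + 1))
  rw [integral_sub (hn.const_mul _) (hn2.const_mul _), integral_const_mul, integral_const_mul,
    sub_eq_zero] at hzero
  rw [div_mul_eq_mul_div, eq_div_iff (by positivity)]
  linarith

lemma integral_sq_mul_exp_neg_mul_sq (hb : 0 < b) :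
    ∫ x : ℝ, x ^ 2 * exp (-b * x ^ 2) = 1 / (2 * b) * √(π / b) := by
  have h := integral_pow_add_two_mul_exp_neg_mul_sq hb 0
  simp only [pow_zero, one_mul, integral_gaussian] at h
  rw [h]
  norm_num

lemma integral_pow_four_mul_exp_neg_mul_sq (hb : 0 < b) :
    ∫ x : ℝ, x ^ 4 * exp (-b * x ^ 2) = 3 / (4 * b ^ 2) * √(π / b) := by
  rw [integral_pow_add_two_mul_exp_neg_mul_sq hb 2, integral_sq_mul_exp_neg_mul_sq hb]
  field_simp
  norm_num

lemma integral_biquadratic_mul_exp_neg_mul_sq (hb : 0 < b) (p q r : ℝ) :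
    ∫ x : ℝ, (p * x ^ 4 + q * x ^ 2 + r) * exp (-b * x ^ 2)
      = (3 * p / (4 * b ^ 2) + q / (2 * b) + r) * √(π / b) := by
  have h4 := (integrable_pow_mul_exp_neg_mul_sq hb 4).const_mul p
  have h2 := (integrable_pow_mul_exp_neg_mul_sq hb 2).const_mul q
  have h0 := (integrable_exp_neg_mul_sq hb).const_mul r
  have h42 : Integrable fun x : ℝ =>
      p * (x ^ 4 * exp (-b * x ^ 2)) + q * (x ^ 2 * exp (-b * x ^ 2)) := h4.add h2
  simp_rw [add_mul, mul_assoc]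
  rw [integral_add h42 h0, integral_add h4 h2, integral_const_mul, integral_const_mul,
    integral_const_mul, integral_pow_four_mul_exp_neg_mul_sq hb,
    integral_sq_mul_exp_neg_mul_sq hb, integral_gaussian]
  ring

end GaussianMoments

section NormalScaleScore

variable {σ : ℝ}

lemma normal_density_rpow (hσ : 0 < σ) (c y : ℝ) :
    ((√(2 * π) * σ)⁻¹ * exp (-y ^ 2 / (2 * σ ^ 2))) ^ c
      = ((√(2 * π) * σ) ^ c)⁻¹ * exp (-(c / (2 * σ ^ 2)) * y ^ 2) := by
  rw [mul_rpow (by positivity) (exp_pos _).le, inv_rpow (by positivity), ← exp_mul]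
  ring_nf

lemma integral_sq_scale_score_mul_normal_density_rpow (μ : ℝ) (hσ : 0 < σ) {c : ℝ}
    (hc : 0 < c) :
    ∫ x : ℝ, ((1 / σ) * ((x - μ) ^ 2 / σ ^ 2 - 1)) ^ 2 *
        ((√(2 * π) * σ)⁻¹ * exp (-(x - μ) ^ 2 / (2 * σ ^ 2))) ^ c
      = (c ^ 2 - 2 * c + 3) / (c ^ 2 * √c) / (σ ^ 2 * (√(2 * π) * σ) ^ (c - 1)) := by
  have hb : 0 < c / (2 * σ ^ 2) := by positivity
  have hC : 0 < √(2 * π) * σ := by positivity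
  have hpoint : ∀ y : ℝ, ((1 / σ) * (y ^ 2 / σ ^ 2 - 1)) ^ 2 *
        ((√(2 * π) * σ)⁻¹ * exp (-y ^ 2 / (2 * σ ^ 2))) ^ c
      = ((√(2 * π) * σ) ^ c * σ ^ 2)⁻¹ *
          (((σ ^ 4)⁻¹ * y ^ 4 + (-2 / σ ^ 2) * y ^ 2 + 1) * exp (-(c / (2 * σ ^ 2)) * y ^ 2)) := by
    intro y
    rw [normal_density_rpow hσ]
    field_simp
    ring
  have hsqrt : √(π / (c / (2 * σ ^ 2))) = √(2 * π) * σ / √c := by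
    rw [show π / (c / (2 * σ ^ 2)) = 2 * π * σ ^ 2 / c by field_simp, sqrt_div' _ hc.le,
      sqrt_mul (by positivity), sqrt_sq hσ.le]
  rw [integral_sub_right_eq_self (fun y => ((1 / σ) * (y ^ 2 / σ ^ 2 - 1)) ^ 2 *
      ((√(2 * π) * σ)⁻¹ * exp (-y ^ 2 / (2 * σ ^ 2))) ^ c) μ]
  simp only [hpoint]
  rw [integral_const_mul, integral_biquadratic_mul_exp_neg_mul_sq hb, hsqrt,
    rpow_sub_one hC.ne']
  field_simp
  ring

end NormalScaleScore

lemma sq_neg_div_rpow_mul_rpow_mul_rpow {β σ : ℝ} (hβ : -1 ≤ β) (hσ : 0 ≤ σ) :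
    (-β / ((2 * π) ^ (β / 2) * σ ^ (β + 1) * (β + 1) ^ ((3 : ℝ) / 2))) ^ 2
      = β ^ 2 / ((2 * π) ^ β * σ ^ (2 * (β + 1)) * (β + 1) ^ 3) := by
  have hsq : ∀ {x : ℝ} (y : ℝ), 0 ≤ x → (x ^ y) ^ 2 = x ^ (y * 2) := fun y hx => by
    exact_mod_cast (rpow_mul_natCast hx y 2).symm
  rw [div_pow, neg_sq, mul_pow, mul_pow, hsq _ (by positivity), hsq _ hσ, hsq _ (by linarith),
    div_mul_cancel₀ β two_ne_zero, mul_comm _ (2 : ℝ),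
    show (3 : ℝ) / 2 * 2 = (3 : ℕ) by norm_num, rpow_natCast]

/-- In the normal model, the `(2,2)` entry of `K_β(μ,σ)`:
`∫ ((1/σ)·((x−μ)²/σ² − 1))²·φ_{μ,σ}^(2β+1) dx − ξ₂² = τ(β)/(σ^(2(β+1))·(2π)^β)`
with `ξ₂ = −β/((2π)^(β/2)·σ^(β+1)·(β+1)^(3/2))` and
`τ(β) = 2(2β²+1)√(2β+1)/(2β+1)³ − β²/(β+1)³`. -/
theorem normal_K_beta_scale (β μ σ : ℝ) (hβ : 0 ≤ β) (hσ : 0 < σ)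
    (ξ₂ : ℝ) (hξ₂ : ξ₂ = -β / ((2 * π) ^ (β / 2) * σ ^ (β + 1) * (β + 1) ^ ((3 : ℝ) / 2)))
    (τ : ℝ)
    (hτ : τ = 2 * (2 * β ^ 2 + 1) * Real.sqrt (2 * β + 1) / (2 * β + 1) ^ 3
            - β ^ 2 / (β + 1) ^ 3) :
    (∫ x : ℝ, ((1 / σ) * ((x - μ) ^ 2 / σ ^ 2 - 1)) ^ 2 *
          ((Real.sqrt (2 * π) * σ)⁻¹ * Real.exp (-(x - μ) ^ 2 / (2 * σ ^ 2))) ^ (2 * β + 1))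
        - ξ₂ ^ 2
      = τ / (σ ^ (2 * (β + 1)) * (2 * π) ^ β) := by
  have hc : 0 < 2 * β + 1 := by linarith
  have hnormal : (√(2 * π) * σ) ^ (2 * β + 1 - 1) = (2 * π) ^ β * σ ^ (2 * β) := by
    rw [add_sub_cancel_right, mul_rpow (by positivity) hσ.le,
      ← rpow_div_two_eq_sqrt _ (by positivity)]
    ring_nf
  have hscale : σ ^ (2 * (β + 1)) = σ ^ 2 * σ ^ (2 * β) := by
    rw [mul_add, mul_one, rpow_add hσ, mul_comm, rpow_two]
  have hroot : √(2 * β + 1) ^ 2 = 2 * β + 1 := sq_sqrt hc.le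
  rw [integral_sq_scale_score_mul_normal_density_rpow μ hσ hc, hξ₂,
    sq_neg_div_rpow_mul_rpow_mul_rpow (by linarith) hσ.le, hτ, hnormal, hscale]
  field_simp
  linear_combination (-2 * (2 * β ^ 2 + 1) * (β + 1) ^ 3) * hroot
end
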